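/- For every real x the following bounds hold: 0 ≤ Ψ(x) < e, 0 ≤ Ψ'(x) ≤ √(54/e), 0 < Φ(x) < √(2πe), and 0 < Φ'(x) ≤ √e, where Ψ' and Φ' denote the derivatives of Ψ and Φ. -/

import Mathlib

/-!
On `x > 1/2`, with `t = (2x-1)⁻²`, one has `Ψ'(x)² = 16 t³ e^{2-2t} = 2e² · s³e^{-s}` for `s = 2t`,
and `s³e^{-s} ≤ 27e^{-3}` (the maximum, at `s = 3`), which gives `Ψ' ≤ √(54/e)`; on `x ≤ 1/2`,
`Ψ` attains its minimum `0`, so `Ψ'(x) = 0`. For `Φ`, the Gaussian integrand is positive with total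
integral `√(2π)`, so `∫_{-∞}^x` lies strictly between `0` and `√(2π)`, and `Φ' = √e · e^{-x²/2}`.
-/

open Real MeasureTheory Set

/-- Ψ(x) = 0 for x ≤ 1/2 and Ψ(x) = exp(1 − 1/(2x−1)²) for x > 1/2. -/
noncomputable def Psi (x : ℝ) : ℝ :=
  if x ≤ 1/2 then 0 else Real.exp (1 - 1/(2*x - 1)^2)

/-- Φ(x) = √e · ∫_{−∞}^x exp(−t²/2) dt. -/
noncomputable def Phi (x : ℝ) : ℝ :=
  Real.sqrt (Real.exp 1) * ∫ t in Set.Iic x, Real.exp (-t^2/2)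

lemma pow_mul_exp_neg_le {x : ℝ} (hx : 0 ≤ x) (n : ℕ) :
    x ^ n * exp (-x) ≤ n ^ n * exp (-n) := by
  rcases n.eq_zero_or_pos with rfl | hn
  · simpa using hx
  have hn' : (0 : ℝ) < n := by exact_mod_cast hn
  have hlin : x / n ≤ exp (x / n - 1) := by linarith [add_one_le_exp (x / n - 1)]
  have hpow : (x / n) ^ n ≤ exp (x - n) := by
    calc (x / n) ^ n ≤ exp (x / n - 1) ^ n := by gcongr
      _ = exp (x - n) := by rw [← exp_nat_mul]; field_simp
  rw [div_pow, div_le_iff₀ (by positivity)] at hpow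
  calc x ^ n * exp (-x) ≤ exp (x - n) * n ^ n * exp (-x) := by gcongr
    _ = n ^ n * exp (-n) := by rw [mul_comm, ← mul_assoc, ← exp_add]; ring_nf

lemma setIntegral_pos_of_forall_pos {X : Type*} [MeasurableSpace X] {μ : Measure X} {s : Set X}
    {f : X → ℝ} (hf : ∀ x, 0 < f x) (hfi : IntegrableOn f s μ) (hs : μ s ≠ 0) :
    0 < ∫ x in s, f x ∂μ := by
  rw [setIntegral_pos_iff_support_of_nonneg_ae (.of_forall fun x => (hf x).le) hfi,
    Function.support_eq_univ fun x => (hf x).ne', univ_inter]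
  exact pos_iff_ne_zero.2 hs

lemma hasDerivAt_integral_Iic {E : Type*} [NormedAddCommGroup E] [NormedSpace ℝ E]
    [CompleteSpace E] {f : ℝ → E} (hf : Continuous f) (hfi : Integrable f) (x : ℝ) :
    HasDerivAt (fun u => ∫ t in Iic u, f t) (f x) x := by
  have h : (fun u => ∫ t in Iic u, f t) = fun u => (∫ t in Iic 0, f t) + ∫ t in (0 : ℝ)..u, f t := by
    ext u
    rw [← intervalIntegral.integral_Iic_sub_Iic hfi.integrableOn hfi.integrableOn, add_sub_cancel]
  rw [h]
  exact ((hf.integral_hasStrictDerivAt 0 x).hasDerivAt).const_add _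

lemma Psi_of_le_half {x : ℝ} (hx : x ≤ 1/2) : Psi x = 0 := if_pos hx

lemma Psi_of_half_lt {x : ℝ} (hx : 1/2 < x) : Psi x = exp (1 - 1/(2*x - 1)^2) := if_neg hx.not_ge

lemma Psi_nonneg (x : ℝ) : 0 ≤ Psi x := by
  unfold Psi; split <;> positivity

lemma Psi_lt_exp_one (x : ℝ) : Psi x < exp 1 := by
  rcases le_or_gt x (1/2) with hx | hx
  · rw [Psi_of_le_half hx]; exact exp_pos 1
  · rw [Psi_of_half_lt hx, exp_lt_exp]
    have : 0 < 2*x - 1 := by linarith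
    have : 0 < 1/(2*x - 1)^2 := by positivity
    linarith

lemma hasDerivAt_Psi_of_half_lt {x : ℝ} (hx : 1/2 < x) :
    HasDerivAt Psi (exp (1 - 1/(2*x - 1)^2) * (4/(2*x - 1)^3)) x := by
  have hu : 2*x - 1 ≠ 0 := by linarith
  have hPsi : Psi =ᶠ[nhds x] fun y => exp (1 - 1/(2*y - 1)^2) := by
    filter_upwards [Ioi_mem_nhds hx] with y hy using Psi_of_half_lt hy
  have h : HasDerivAt (fun y => exp (1 - 1/(2*y - 1)^2))
      (exp (1 - 1/(2*x - 1)^2) * (4/(2*x - 1)^3)) x := by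
    have h := (((((hasDerivAt_id x).const_mul 2).sub_const 1).pow 2).inv (by simpa)).const_sub 1
    convert h.exp using 1
    · ext y; simp [one_div]
    · simp only [id, Pi.pow_apply, Pi.inv_apply]; field_simp; ring
  exact h.congr_of_eventuallyEq hPsi

lemma deriv_Psi_of_le_half {x : ℝ} (hx : x ≤ 1/2) : deriv Psi x = 0 :=
  IsLocalMin.deriv_eq_zero <| Filter.Eventually.of_forall fun y => Psi_of_le_half hx ▸ Psi_nonneg y

lemma deriv_Psi_nonneg (x : ℝ) : 0 ≤ deriv Psi x := by
  rcases le_or_gt x (1/2) with hx | hx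
  · rw [deriv_Psi_of_le_half hx]
  · have : 0 < 2*x - 1 := by linarith
    rw [(hasDerivAt_Psi_of_half_lt hx).deriv]; positivity

lemma deriv_Psi_le (x : ℝ) : deriv Psi x ≤ sqrt (54 / exp 1) := by
  rcases le_or_gt x (1/2) with hx | hx
  · rw [deriv_Psi_of_le_half hx]; positivity
  rw [(hasDerivAt_Psi_of_half_lt hx).deriv]
  have hu : 0 < 2*x - 1 := by linarith
  set t := 1/(2*x - 1)^2 with ht
  rw [le_sqrt (by positivity) (by positivity)]
  have hsq : (exp (1 - t) * (4/(2*x - 1)^3))^2 = 2 * exp 2 * ((2*t)^3 * exp (-(2*t))) := by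
    rw [mul_pow, ← exp_nat_mul, show ((2 : ℕ) : ℝ) * (1 - t) = 2 + -(2*t) by push_cast; ring,
      exp_add, ht]
    field_simp
    ring
  have hmax : (2*t)^3 * exp (-(2*t)) ≤ 3^3 * exp (-3) := by
    exact_mod_cast pow_mul_exp_neg_le (x := 2*t) (by positivity) 3
  calc (exp (1 - t) * (4/(2*x - 1)^3))^2 ≤ 2 * exp 2 * (3^3 * exp (-3)) := by
        rw [hsq]; exact mul_le_mul_of_nonneg_left hmax (by positivity)
    _ = 54 * exp (2 + -3) := by rw [exp_add]; ring
    _ = 54 / exp 1 := by rw [div_eq_mul_inv, ← exp_neg]; norm_num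

lemma integrable_exp_neg_sq_div_two : Integrable fun t : ℝ => exp (-t^2/2) := by
  simpa [neg_div, div_eq_inv_mul] using integrable_exp_neg_mul_sq (b := 1/2) (by norm_num)

lemma integral_exp_neg_sq_div_two : ∫ t : ℝ, exp (-t^2/2) = sqrt (2 * π) := by
  simpa [neg_div, div_eq_inv_mul] using integral_gaussian (1/2)

lemma integral_Iic_exp_neg_sq_div_two_pos (x : ℝ) : 0 < ∫ t in Iic x, exp (-t^2/2) :=
  setIntegral_pos_of_forall_pos (fun _ => exp_pos _) integrable_exp_neg_sq_div_two.integrableOn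
    (by simp)

lemma integral_Iic_exp_neg_sq_div_two_lt (x : ℝ) : ∫ t in Iic x, exp (-t^2/2) < sqrt (2 * π) := by
  have hIoi : 0 < ∫ t in Ioi x, exp (-t^2/2) :=
    setIntegral_pos_of_forall_pos (fun _ => exp_pos _) integrable_exp_neg_sq_div_two.integrableOn
      (by simp)
  rw [← integral_exp_neg_sq_div_two, ← intervalIntegral.integral_Iic_add_Ioi
    integrable_exp_neg_sq_div_two.integrableOn integrable_exp_neg_sq_div_two.integrableOn]
  exact lt_add_of_pos_right _ hIoi

lemma Phi_pos (x : ℝ) : 0 < Phi x :=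
  mul_pos (sqrt_pos.2 (exp_pos 1)) (integral_Iic_exp_neg_sq_div_two_pos x)

lemma Phi_lt (x : ℝ) : Phi x < sqrt (2 * π * exp 1) := by
  rw [sqrt_mul (by positivity), mul_comm (sqrt (2 * π))]
  exact mul_lt_mul_of_pos_left (integral_Iic_exp_neg_sq_div_two_lt x) (sqrt_pos.2 (exp_pos 1))

lemma hasDerivAt_Phi (x : ℝ) : HasDerivAt Phi (sqrt (exp 1) * exp (-x^2/2)) x :=
  (hasDerivAt_integral_Iic (by fun_prop) integrable_exp_neg_sq_div_two x).const_mul _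

lemma deriv_Phi_pos (x : ℝ) : 0 < deriv Phi x := by
  rw [(hasDerivAt_Phi x).deriv]; positivity

lemma deriv_Phi_le (x : ℝ) : deriv Phi x ≤ sqrt (exp 1) := by
  rw [(hasDerivAt_Phi x).deriv]
  refine mul_le_of_le_one_right (sqrt_nonneg _) (exp_le_one_iff.2 ?_)
  exact div_nonpos_of_nonpos_of_nonneg (neg_nonpos.2 (sq_nonneg x)) zero_le_two

/-- For every real x: 0 ≤ Ψ(x) < e, 0 ≤ Ψ'(x) ≤ √(54/e), 0 < Φ(x) < √(2πe),
and 0 < Φ'(x) ≤ √e. -/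
theorem stmt4 (x : ℝ) :
    (0 ≤ Psi x ∧ Psi x < Real.exp 1) ∧
    (0 ≤ deriv Psi x ∧ deriv Psi x ≤ Real.sqrt (54 / Real.exp 1)) ∧
    (0 < Phi x ∧ Phi x < Real.sqrt (2 * Real.pi * Real.exp 1)) ∧
    (0 < deriv Phi x ∧ deriv Phi x ≤ Real.sqrt (Real.exp 1)) :=
  ⟨⟨Psi_nonneg x, Psi_lt_exp_one x⟩, ⟨deriv_Psi_nonneg x, deriv_Psi_le x⟩,
    ⟨Phi_pos x, Phi_lt x⟩, ⟨deriv_Phi_pos x, deriv_Phi_le x⟩⟩
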